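/- Let p ∈ (1,2) and c_p = (p-1)·(2-p)^((2-p)/(p-1)). Then for all real t ≥ 0, one has t + c_p·t² - t^p ≥ 0. -/
import Mathlib


theorem stmt_0 (p : ℝ) (hp1 : 1 < p) (hp2 : p < 2) :
    ∀ t : ℝ, 0 ≤ t →
      0 ≤ t + (p - 1) * (2 - p) ^ ((2 - p) / (p - 1)) * t ^ 2 - t ^ p := by
  intro t ht
  rcases eq_or_lt_of_le ht with h0 | h0
  · rw [← h0, Real.zero_rpow (by linarith : p ≠ 0)]
    norm_num
  · have hq : (0:ℝ) < 2 - p := by linarith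
    have hw : (0:ℝ) < p - 1 := by linarith
    set a : ℝ := (2 - p) ^ ((2 - p) / (p - 1)) with ha
    have hapos : 0 < a := Real.rpow_pos_of_pos hq _
    have hmain := Real.geom_mean_le_arith_mean2_weighted
      (le_of_lt hq) (le_of_lt hw) (le_of_lt (inv_pos.mpr hq))
      (le_of_lt (mul_pos hapos h0)) (by ring)
    have hae : a ^ (p - 1) = (2 - p) ^ (2 - p) := by
      rw [ha, ← Real.rpow_mul hq.le, div_mul_cancel₀ _ hw.ne']
    have hprod : ((2 - p)⁻¹) ^ (2 - p) * (a * t) ^ (p - 1) = t ^ (p - 1) := by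
      rw [Real.mul_rpow hapos.le ht, hae,
        show ((2 - p)⁻¹) ^ (2 - p) * ((2 - p) ^ (2 - p) * t ^ (p - 1))
          = (((2 - p)⁻¹ * (2 - p)) ^ (2 - p)) * t ^ (p - 1) by
            rw [Real.mul_rpow (inv_nonneg.mpr hq.le) hq.le]; ring,
        inv_mul_cancel₀ hq.ne', Real.one_rpow, one_mul]
    rw [hprod, mul_inv_cancel₀ hq.ne'] at hmain
    -- hmain : t ^ (p - 1) ≤ 1 + (p - 1) * (a * t)
    have hsplit : t ^ p = t * t ^ (p - 1) := by
      rw [show t * t ^ (p - 1) = t ^ (1:ℝ) * t ^ (p - 1) by rw [Real.rpow_one],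
        ← Real.rpow_add h0]
      norm_num
    nlinarith [mul_le_mul_of_nonneg_left hmain ht]
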